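/- Let A, B be disjoint finite sets, let V_AB ⊆ ℂ^{A⊎B} and V_B ⊆ ℂ^B be ℂ-linear subspaces. Then the following are equivalent: (i) V_AB∘B + V_B = ℂ^B (the full sum property); (ii) for every affine space Â_AB with translate V_AB and every affine space Â_B with translate V_B, the matched composition Â_AB ↔ Â_B is nonempty. Moreover, when (i) holds, for any such Â_AB, Â_B the set Â_AB ↔ Â_B is an affine space with vector space translate V_AB ↔ V_B. -/
import Mathlib


/-!
STATEMENT 9: Let A, B be disjoint finite sets, let V_AB ⊆ ℂ^{A⊎B} and V_B ⊆ ℂ^B be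
ℂ-linear subspaces. TFAE: (i) V_AB∘B + V_B = ℂ^B (the full sum property);
(ii) for every affine space Â_AB with translate V_AB and every affine space Â_B with
translate V_B, the matched composition Â_AB ↔ Â_B is nonempty. Moreover, when (i)
holds, for any such Â_AB, Â_B the set Â_AB ↔ Â_B is an affine space with vector space
translate V_AB ↔ V_B.
-/

/-- Matched composition `K_AB ↔ K_B := {f_A : ∃ h_B ∈ K_B, (f_A,h_B) ∈ K_AB}`. -/
def matched1 {A B : Type*} (KAB : Set ((A → ℂ) × (B → ℂ))) (KB : Set (B → ℂ)) :
    Set (A → ℂ) :=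
  {fA | ∃ h ∈ KB, (fA, h) ∈ KAB}

/-- The restriction `V∘B` of a subspace `V ⊆ ℂ^A × ℂ^B` to `B`. -/
noncomputable def restrictionB {A B : Type*} (V : Submodule ℂ ((A → ℂ) × (B → ℂ))) :
    Submodule ℂ (B → ℂ) where
  carrier := {fB | ∃ fA, (fA, fB) ∈ V}
  add_mem' := by
    rintro a b ⟨pa, ha⟩ ⟨pb, hb⟩
    exact ⟨pa + pb, V.add_mem ha hb⟩
  zero_mem' := ⟨0, V.zero_mem⟩
  smul_mem' := by
    rintro c a ⟨p, hp⟩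
    exact ⟨c • p, V.smul_mem c hp⟩

lemma aux_nonempty {A B : Type*}
    (VAB : Submodule ℂ ((A → ℂ) × (B → ℂ))) (VB : Submodule ℂ (B → ℂ))
    (hsup : restrictionB VAB ⊔ VB = ⊤) (x : (A → ℂ) × (B → ℂ)) (y : B → ℂ) :
    (matched1 ((x + ·) '' (VAB : Set ((A → ℂ) × (B → ℂ))))
        ((y + ·) '' (VB : Set (B → ℂ)))).Nonempty := by
  have hy : y - x.2 ∈ restrictionB VAB ⊔ VB := by rw [hsup]; trivial
  rcases Submodule.mem_sup.mp hy with ⟨r, hr, w, hw, hrw⟩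
  rcases hr with ⟨fA, hfA⟩
  refine ⟨x.1 + fA, x.2 + r, ⟨-w, VB.neg_mem hw, ?_⟩, ⟨(fA, r), hfA, rfl⟩⟩
  show y + -w = x.2 + r
  have : r = y - x.2 - w := by rw [← hrw]; abel
  rw [this]; abel

theorem statement9 (A B : Type*) [Fintype A] [Fintype B]
    (VAB : Submodule ℂ ((A → ℂ) × (B → ℂ))) (VB : Submodule ℂ (B → ℂ)) :
    -- (i) ↔ (ii)
    ((restrictionB VAB ⊔ VB = ⊤) ↔
      ∀ (x : (A → ℂ) × (B → ℂ)) (y : B → ℂ),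
        (matched1 ((x + ·) '' (VAB : Set ((A → ℂ) × (B → ℂ))))
            ((y + ·) '' (VB : Set (B → ℂ)))).Nonempty) ∧
    -- moreover, when (i) holds the matched composition of any pair of cosets is an
    -- affine space with vector space translate V_AB ↔ V_B
    ((restrictionB VAB ⊔ VB = ⊤) →
      ∀ (x : (A → ℂ) × (B → ℂ)) (y : B → ℂ), ∃ α : A → ℂ,
        matched1 ((x + ·) '' (VAB : Set ((A → ℂ) × (B → ℂ))))
            ((y + ·) '' (VB : Set (B → ℂ)))
          = (α + ·) '' matched1 (VAB : Set ((A → ℂ) × (B → ℂ)))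
              (VB : Set (B → ℂ))) := by
  constructor
  · constructor
    · exact fun h => aux_nonempty VAB VB h
    · intro h
      rw [eq_top_iff]
      rintro z -
      obtain ⟨fA, h', ⟨w, hw, hwz⟩, ⟨v, hv, hveq⟩⟩ := h 0 z
      replace hwz : z + w = h' := hwz
      replace hveq : 0 + v = (fA, h') := hveq
      have hv' : (fA, h') ∈ VAB := by rwa [show (fA, h') = v by rw [← hveq]; abel]
      have hres : h' ∈ restrictionB VAB := ⟨fA, hv'⟩
      have : z = h' + (-w) := by rw [← hwz]; abel
      rw [this]
      exact Submodule.add_mem_sup hres (VB.neg_mem hw)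
  · intro hsup x y
    obtain ⟨α, h₀, ⟨w₀, hw₀, hw₀eq⟩, ⟨v₀, hv₀, hv₀eq⟩⟩ := aux_nonempty VAB VB hsup x y
    replace hw₀eq : y + w₀ = h₀ := hw₀eq
    replace hv₀eq : x + v₀ = (α, h₀) := hv₀eq
    refine ⟨α, ?_⟩
    ext fA
    simp only [matched1, Set.mem_image, Set.mem_setOf_eq]
    constructor
    · rintro ⟨h, ⟨w, hw, hweq⟩, ⟨v, hv, hveq⟩⟩
      refine ⟨fA - α, ⟨w - w₀, VB.sub_mem hw hw₀, ?_⟩, by abel⟩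
      have : (fA - α, w - w₀) = v - v₀ := by
        have h1 : v = (fA, h) - x := eq_sub_of_add_eq' hveq
        have h2 : v₀ = (α, h₀) - x := eq_sub_of_add_eq' hv₀eq
        rw [h1, h2, ← hweq, ← hw₀eq]
        simp only [Prod.ext_iff, Prod.sub_def, Prod.fst, Prod.snd]
        constructor <;> abel
      rw [this]
      exact VAB.sub_mem hv hv₀
    · rintro ⟨b, ⟨h', hb', hv'⟩, hba⟩
      refine ⟨h₀ + h', ⟨w₀ + h', VB.add_mem hw₀ hb', by rw [← hw₀eq]; abel⟩,
        ⟨v₀ + (b, h'), VAB.add_mem hv₀ hv', ?_⟩⟩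
      rw [show x + (v₀ + (b, h')) = (x + v₀) + (b, h') from (add_assoc x v₀ (b, h')).symm,
        hv₀eq, ← hba]
      rfl
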